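/- arXiv:1012.5217 — 4 statements merged into one kernel-verified Lean document; each statement's English description precedes it below -/
import Mathlib

section
/- Let ω ∈ X. If there exist n₀ ≥ 0 and d ≥ 1 such that ω(n+d) = ω(n) for all integers n ≥ n₀, then there exists n₁ such that ω(n) = 0 for all n ≥ n₁. -/
/-- `ω̄(n) = μ(n)` for `n ≥ 1` and `ω̄(n) = 0` for `n ≤ 0`. -/
noncomputable def omegaBar : ℤ → ℝ := fun n =>
  if 0 < n then ((ArithmeticFunction.moebius n.toNat : ℤ) : ℝ) else 0

/-- `X` is the closure (in the product topology) of the two-sided shift orbit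
`{T^j ω̄ : j ∈ ℤ}`, where `(T^j ω̄)(n) = ω̄(n + j)`. -/
noncomputable def Xspace : Set (ℤ → ℝ) :=
  closure {x | ∃ j : ℤ, x = fun n => omegaBar (n + j)}

/-! If `ω m ≠ 0` for some `m ≥ n₀`, periodicity makes `ω` nonzero along the whole progression
`m, m + d, …, m + (q - 1) d` with `q = (d + 1) ^ 2`. As `d` is coprime to `q`, every shift of `ω̄`
vanishes somewhere on this finite progression, at a point divisible by the square `q`; vanishing
somewhere on a fixed finite set is a closed condition, so it passes to the limit point `ω`. -/

theorem omegaBar_eq_zero_of_sq_dvd {q N : ℤ} (hq : ¬IsUnit q) (hN : q ^ 2 ∣ N) :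
    omegaBar N = 0 := by
  unfold omegaBar
  split_ifs with hpos
  · have hN' : ¬Squarefree N := fun hsq => hq (hsq q (by rwa [← sq]))
    rw [← Int.squarefree_natAbs, ← Int.toNat_of_nonneg hpos.le, Int.natAbs_natCast] at hN'
    simp [ArithmeticFunction.moebius_eq_zero_of_not_squarefree hN']
  · rfl

theorem Int.exists_dvd_add_mul_of_isCoprime {d q : ℤ} (hcop : IsCoprime d q) (hq : 0 < q)
    (a : ℤ) : ∃ k, 0 ≤ k ∧ k < q ∧ q ∣ a + k * d := by
  obtain ⟨u, v, huv⟩ := hcop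
  refine ⟨-a * u % q, Int.emod_nonneg _ hq.ne', Int.emod_lt_of_pos _ hq, ?_⟩
  have hvq : a + -a * u * d ≡ 0 [ZMOD q] :=
    Int.modEq_zero_iff_dvd.mpr ⟨a * v, by linear_combination -a * huv⟩
  exact Int.modEq_zero_iff_dvd.mp <| (((Int.mod_modEq _ q).mul_right d).add_left a).trans hvq

theorem exists_omegaBar_add_mul_add_eq_zero (j m : ℤ) {d : ℤ} (hd : 1 ≤ d) :
    ∃ k, 0 ≤ k ∧ k < (d + 1) ^ 2 ∧ omegaBar (m + k * d + j) = 0 := by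
  have hcop : IsCoprime d ((d + 1) ^ 2) := IsCoprime.pow_right ⟨-1, 1, by ring⟩
  obtain ⟨k, hk0, hkq, hdvd⟩ := Int.exists_dvd_add_mul_of_isCoprime hcop (by positivity) (m + j)
  refine ⟨k, hk0, hkq, omegaBar_eq_zero_of_sq_dvd (q := d + 1) ?_ ?_⟩
  · rw [Int.isUnit_iff]; omega
  · convert hdvd using 1; ring

theorem exists_apply_eq_of_mem_closure {ι α : Type*} [TopologicalSpace α] [T1Space α]
    {S : Set (ι → α)} {F : Finset ι} {a : α} (hS : ∀ y ∈ S, ∃ i ∈ F, y i = a)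
    {x : ι → α} (hx : x ∈ closure S) : ∃ i ∈ F, x i = a := by
  have hclosed : IsClosed (⋃ i ∈ F, (fun y : ι → α => y i) ⁻¹' {a}) :=
    isClosed_biUnion_finset fun i _ => isClosed_singleton.preimage (continuous_apply i)
  simpa using closure_minimal (fun y hy => by simpa using hS y hy) hclosed hx

theorem apply_add_mul_eq_of_periodic_from {α : Type*} {f : ℤ → α} {n₀ d : ℤ} (hd : 0 ≤ d)
    (hper : ∀ n, n₀ ≤ n → f (n + d) = f n) {m : ℤ} (hm : n₀ ≤ m) (k : ℕ) :
    f (m + k * d) = f m := by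
  induction k with
  | zero => simp
  | succ k ih =>
    have hk : n₀ ≤ m + k * d := le_add_of_le_of_nonneg hm (by positivity)
    rw [Nat.cast_succ, add_one_mul, ← add_assoc, hper _ hk, ih]

theorem eventually_periodic_right_eventually_zero_general
    (ω : ℤ → ℝ) (hω : ω ∈ Xspace)
    (n₀ : ℤ) (d : ℤ) (hd : 1 ≤ d)
    (hper : ∀ n : ℤ, n₀ ≤ n → ω (n + d) = ω n) :
    ∃ n₁ : ℤ, ∀ n : ℤ, n₁ ≤ n → ω n = 0 := by
  refine ⟨n₀, fun m hm => ?_⟩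
  set F := (Finset.range ((d + 1) ^ 2).toNat).image fun k : ℕ => m + k * d
  have horbit : ∀ y ∈ {x | ∃ j : ℤ, x = fun n => omegaBar (n + j)}, ∃ i ∈ F, y i = 0 := by
    rintro _ ⟨j, rfl⟩
    obtain ⟨k, hk0, hkq, hk⟩ := exists_omegaBar_add_mul_add_eq_zero j m hd
    lift k to ℕ using hk0
    exact ⟨m + k * d, Finset.mem_image_of_mem _ (Finset.mem_range.mpr (by omega)), hk⟩
  obtain ⟨_, hi, hzero⟩ := exists_apply_eq_of_mem_closure horbit hω
  obtain ⟨k, -, rfl⟩ := Finset.mem_image.mp hi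
  rwa [apply_add_mul_eq_of_periodic_from (by omega) hper hm] at hzero

/-- **Lemma 2 (forward half).** If `ω ∈ X` is eventually periodic to the right,
then `ω(n) = 0` for all large `n`. -/
theorem eventually_periodic_right_eventually_zero
    (ω : ℤ → ℝ) (hω : ω ∈ Xspace)
    (n₀ : ℤ) (hn₀ : 0 ≤ n₀) (d : ℤ) (hd : 1 ≤ d)
    (hper : ∀ n : ℤ, n₀ ≤ n → ω (n + d) = ω n) :
    ∃ n₁ : ℤ, ∀ n : ℤ, n₁ ≤ n → ω n = 0 :=
  eventually_periodic_right_eventually_zero_general ω hω n₀ d hd hper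
end

section
/- The Möbius function is not eventually periodic: there do not exist integers n₀ ≥ 1 and d ≥ 1 such that μ(n+d) = μ(n) for all n ≥ n₀. -/
/-! If `μ(n + d) = μ(n)` for all `n ≥ n₀`, pick a prime `p ≥ n₀` not dividing `d`. Since `d` is
invertible modulo `p²`, some `p + k d` is divisible by `p²`, so `μ(p + k d) = 0 ≠ -1 = μ(p)`. -/

open ArithmeticFunction
open scoped ArithmeticFunction.Moebius

theorem Nat.apply_add_mul_eq_of_eventually_periodic {α : Type*} {f : ℕ → α} {n₀ d : ℕ}
    (hf : ∀ n, n₀ ≤ n → f (n + d) = f n) (k : ℕ) {n : ℕ} (hn : n₀ ≤ n) :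
    f (n + d * k) = f n := by
  induction k with
  | zero => simp
  | succ k ih =>
    rw [Nat.mul_succ, ← Nat.add_assoc, hf _ (hn.trans (Nat.le_add_right _ _)), ih]

theorem Nat.exists_dvd_add_mul_of_coprime {a d N : ℕ} (h : Nat.Coprime d N) (hN : N ≠ 0) :
    ∃ k, N ∣ a + d * k := by
  obtain ⟨k, -, hk⟩ := Nat.exists_mul_mod_eq_of_coprime ((N - 1) * a) h hN
  refine ⟨k, Nat.dvd_of_mod_eq_zero ?_⟩
  have hsum : a + (N - 1) * a = N * a := by
    obtain ⟨M, rfl⟩ := Nat.exists_eq_succ_of_ne_zero hN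
    simp only [Nat.succ_sub_one, Nat.succ_mul, Nat.add_comm]
  rw [Nat.add_mod, hk, ← Nat.add_mod, hsum, Nat.mul_mod_right]

theorem ArithmeticFunction.moebius_eq_zero_of_sq_dvd {p n : ℕ} (hp : p.Prime) (h : p ^ 2 ∣ n) : μ n = 0 :=
  moebius_eq_zero_of_not_squarefree fun hsq => hp.not_isUnit (hsq p (by rwa [← pow_two]))

/-- The Möbius function is not eventually periodic: there are no `n₀ ≥ 1` and
`d ≥ 1` such that `μ(n + d) = μ(n)` for all `n ≥ n₀`. -/
theorem moebius_not_eventually_periodic :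
    ¬ ∃ (n₀ d : ℕ), 1 ≤ n₀ ∧ 1 ≤ d ∧
      ∀ n : ℕ, n₀ ≤ n →
        ArithmeticFunction.moebius (n + d) = ArithmeticFunction.moebius n := by
  rintro ⟨n₀, d, -, hd, hper⟩
  obtain ⟨p, hp_ge, hp⟩ := Nat.exists_infinite_primes (max n₀ (d + 1))
  have hp_not_dvd : ¬ p ∣ d := fun h => by have := Nat.le_of_dvd hd h; omega
  have hcop : Nat.Coprime d (p ^ 2) :=
    ((hp.coprime_iff_not_dvd.2 hp_not_dvd).pow_left 2).symm
  obtain ⟨k, hk⟩ := Nat.exists_dvd_add_mul_of_coprime (a := p) hcop (pow_ne_zero 2 hp.ne_zero)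
  have hμ := Nat.apply_add_mul_eq_of_eventually_periodic hper k (le_of_max_le_left hp_ge)
  rw [moebius_eq_zero_of_sq_dvd hp hk, moebius_apply_prime hp] at hμ
  norm_num at hμ
end

section
/- Let ν be any weak*-limit point of the sequence (ν_N). Then the set {ω ∈ X : there exists k ≥ 1 such that ω(n) = 0 for all n ≥ k, or ω(n) = 0 for all n ≤ −k} has ν-measure zero. -/
open MeasureTheory Filter Topology

/-!
The window `W = (c, c + L]` is tested against the continuous bump
`ω ↦ max 0 (1 - ∑_{n ∈ W} |ω n|)`, which is `1` where `ω` vanishes on `W` and, since `ω̄` is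
integer valued, is the indicator of that event along the orbit of `ω̄`. Hence `ν` gives the event
at most the upper density of the shifts `j` for which `μ` vanishes on `j + W`, that is, of runs of
`L` consecutive non-squarefree integers. A sieve bounds this density by `48 / y` for `L = 24 y`:
since `∑_{d ≥ 2} d⁻² < 11/12`, such a run contains at least `y` integers with no square factor
`d²`, `2 ≤ d ≤ y`, so they are divisible by `d²` for some `d > y`, which happens for a proportion
at most `2 / y` of all integers. A point vanishing on a half-line vanishes on windows of every
length, so the set of eventually vanishing points is `ν`-null.
-/

open Finset BoundedContinuousFunction

namespace Nat

theorem card_filter_dvd_Ioc_le (a L : ℕ) {k : ℕ} (hk : 0 < k) :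
    (#{m ∈ Ioc a (a + L) | k ∣ m} : ℝ) ≤ L / k + 1 := by
  have hsplit : #{m ∈ Ioc a (a + L) | k ∣ m} + a / k = (a + L) / k := by
    rw [← Ioc_filter_dvd_card_eq_div, ← Ioc_filter_dvd_card_eq_div, add_comm,
      ← card_union_of_disjoint (disjoint_filter_filter (Ioc_disjoint_Ioc_of_le le_rfl)),
      ← filter_union, Ioc_union_Ioc_eq_Ioc (Nat.zero_le a) (Nat.le_add_right a L)]
  have hk' : (0 : ℝ) < k := by exact_mod_cast hk
  have hup := Nat.floor_le (a := ((a + L : ℕ) : ℝ) / k) (by positivity)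
  have hlow := Nat.sub_one_lt_floor ((a : ℝ) / k)
  rw [Nat.floor_div_eq_div] at hup hlow
  have hsplit' : (#{m ∈ Ioc a (a + L) | k ∣ m} : ℝ) + (a / k : ℕ) = ((a + L) / k : ℕ) := by
    exact_mod_cast hsplit
  have : ((a + L : ℕ) : ℝ) / k = a / k + L / k := by push_cast; ring
  linarith

theorem sum_Icc_two_inv_sq_le (y : ℕ) : ∑ d ∈ Icc 2 y, ((d : ℝ) ^ 2)⁻¹ ≤ 11 / 12 := by
  calc ∑ d ∈ Icc 2 y, ((d : ℝ) ^ 2)⁻¹ ≤ ∑ d ∈ insert 2 (Ioo 2 (y + 1)), ((d : ℝ) ^ 2)⁻¹ := by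
        refine sum_le_sum_of_subset_of_nonneg (fun d hd => ?_) (fun _ _ _ => by positivity)
        simp only [mem_Icc, mem_insert, mem_Ioo] at hd ⊢
        omega
    _ ≤ (2 ^ 2 : ℝ)⁻¹ + 2 / (2 + 1) := by
        rw [sum_insert (by simp)]
        have := sum_Ioo_inv_sq_le (α := ℝ) 2 (y + 1)
        push_cast at this ⊢
        linarith
    _ = 11 / 12 := by norm_num

theorem card_filter_small_square_dvd_Ioc_le (a L y : ℕ) :
    (#{m ∈ Ioc a (a + L) | ∃ d ∈ Icc 2 y, d * d ∣ m} : ℝ) ≤ 11 / 12 * L + y := by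
  have hunion : {m ∈ Ioc a (a + L) | ∃ d ∈ Icc 2 y, d * d ∣ m} =
      (Icc 2 y).biUnion fun d => {m ∈ Ioc a (a + L) | d * d ∣ m} := by
    ext m; simp only [mem_filter, mem_biUnion]; tauto
  calc (#{m ∈ Ioc a (a + L) | ∃ d ∈ Icc 2 y, d * d ∣ m} : ℝ)
      ≤ ∑ d ∈ Icc 2 y, (#{m ∈ Ioc a (a + L) | d * d ∣ m} : ℝ) := by
        rw [hunion]; exact_mod_cast card_biUnion_le
    _ ≤ ∑ d ∈ Icc 2 y, ((L : ℝ) * ((d : ℝ) ^ 2)⁻¹ + 1) := by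
        refine sum_le_sum fun d hd => ?_
        have hd : 0 < d * d := by have := (mem_Icc.1 hd).1; positivity
        simpa [div_eq_mul_inv, sq] using card_filter_dvd_Ioc_le a L hd
    _ ≤ L * (11 / 12) + y := by
        rw [sum_add_distrib, ← mul_sum, sum_const, Nat.card_Icc, nsmul_eq_mul, mul_one]
        gcongr
        · exact sum_Icc_two_inv_sq_le y
        · exact_mod_cast (by omega : y + 1 - 2 ≤ y)
    _ = 11 / 12 * L + y := by ring

open scoped Classical in
theorem card_filter_large_square_dvd_Ioc_le (X y : ℕ) :
    (#{m ∈ Ioc 0 X | ∃ d, y < d ∧ d * d ∣ m} : ℝ) ≤ 2 * X / (y + 1) := by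
  have hsub : {m ∈ Ioc 0 X | ∃ d, y < d ∧ d * d ∣ m} ⊆
      (Ioo y (X + 1)).biUnion fun d => {m ∈ Ioc 0 X | d * d ∣ m} := by
    intro m hm
    simp only [mem_filter, mem_Ioc, mem_biUnion, mem_Ioo] at hm ⊢
    obtain ⟨⟨hm0, hmX⟩, d, hyd, hdm⟩ := hm
    have : d ≤ d * d := Nat.le_mul_self d
    have : d * d ≤ m := Nat.le_of_dvd hm0 hdm
    exact ⟨d, ⟨hyd, by omega⟩, ⟨hm0, hmX⟩, hdm⟩
  calc (#{m ∈ Ioc 0 X | ∃ d, y < d ∧ d * d ∣ m} : ℝ)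
      ≤ ∑ d ∈ Ioo y (X + 1), (#{m ∈ Ioc 0 X | d * d ∣ m} : ℝ) := by
        exact_mod_cast (card_le_card hsub).trans card_biUnion_le
    _ ≤ ∑ d ∈ Ioo y (X + 1), (X : ℝ) * ((d : ℝ) ^ 2)⁻¹ := by
        refine sum_le_sum fun d _ => ?_
        rw [Nat.Ioc_filter_dvd_card_eq_div, ← div_eq_mul_inv, sq]
        exact_mod_cast Nat.cast_div_le
    _ ≤ X * (2 / (y + 1)) := by
        rw [← mul_sum]
        gcongr
        exact sum_Ioo_inv_sq_le y (X + 1)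
    _ = 2 * X / (y + 1) := by ring

theorem exists_gt_mul_self_dvd_of_not_squarefree {m : ℕ} (hm : m ≠ 0) (hsq : ¬ Squarefree m) {y : ℕ}
    (hsmall : ¬ ∃ d ∈ Icc 2 y, d * d ∣ m) : ∃ d, y < d ∧ d * d ∣ m := by
  obtain ⟨d, hdm, hd⟩ : ∃ d, d * d ∣ m ∧ ¬ IsUnit d := by
    simpa [Squarefree] using hsq
  have hd0 : d ≠ 0 := by rintro rfl; simp [hm] at hdm
  have hd1 : d ≠ 1 := by rintro rfl; simp at hd
  refine ⟨d, ?_, hdm⟩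
  by_contra! hdy
  exact hsmall ⟨d, mem_Icc.2 ⟨by omega, hdy⟩, hdm⟩

open scoped Classical in
/-- The window has `24 y` elements, at most `11/12 · 24 y + y = 23 y` of which have a square
factor `d²` with `2 ≤ d ≤ y`; every other element is non-squarefree only through some `d > y`. -/
theorem le_card_large_square_dvd_of_nonsquarefree_run {a y : ℕ}
    (hrun : ∀ m ∈ Ioc a (a + 24 * y), ¬ Squarefree m) :
    y ≤ #{m ∈ Ioc a (a + 24 * y) | ∃ d, y < d ∧ d * d ∣ m} := by
  set W := Ioc a (a + 24 * y)
  have hfree : {m ∈ W | ¬ ∃ d ∈ Icc 2 y, d * d ∣ m} ⊆ {m ∈ W | ∃ d, y < d ∧ d * d ∣ m} := by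
    intro m hm
    simp only [mem_filter] at hm ⊢
    have hm0 : m ≠ 0 := by have := (mem_Ioc.1 hm.1).1; omega
    exact ⟨hm.1, exists_gt_mul_self_dvd_of_not_squarefree hm0 (hrun m hm.1) hm.2⟩
  have hcard := card_filter_add_card_filter_not (s := W) (fun m => ∃ d ∈ Icc 2 y, d * d ∣ m)
  rw [Nat.card_Ioc, Nat.add_sub_cancel_left] at hcard
  have hsmall := card_filter_small_square_dvd_Ioc_le a (24 * y) y
  have : (y : ℝ) ≤ #{m ∈ W | ¬ ∃ d ∈ Icc 2 y, d * d ∣ m} := by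
    have hcard' : (#{m ∈ W | ∃ d ∈ Icc 2 y, d * d ∣ m} : ℝ)
        + #{m ∈ W | ¬ ∃ d ∈ Icc 2 y, d * d ∣ m} = 24 * y := by exact_mod_cast hcard
    push_cast at hsmall
    linarith
  exact (Nat.cast_le.1 this).trans (card_le_card hfree)

/-- Double counting: each run starting below `N` contains `y` elements of `(0, N + 24 y]` with a
large square factor, each such element lies in at most `24 y` runs, and there are at most
`2 (N + 24 y) / y` of them. -/
theorem card_nonsquarefree_runs_le {y : ℕ} (hy : 0 < y) (N : ℕ) :
    (#{a ∈ range N | ∀ m ∈ Ioc a (a + (24 * y : ℕ)), ¬ Squarefree m} : ℝ) ≤ 48 / y * N + 1152 := by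
  set runs := {a ∈ range N | ∀ m ∈ Ioc a (a + (24 * y : ℕ)), ¬ Squarefree m}
  set L := 24 * y
  classical
  set large := {m ∈ Ioc 0 (N + L) | ∃ d, y < d ∧ d * d ∣ m}
  have hdouble : #runs * y ≤ #large * L := by
    refine card_mul_le_card_mul (fun a m => m ∈ Ioc a (a + L)) (fun a ha => ?_) (fun m _ => ?_)
    · simp only [runs, mem_filter, mem_range] at ha
      refine (le_card_large_square_dvd_of_nonsquarefree_run ha.2).trans (card_le_card ?_)
      intro m hm
      simp only [bipartiteAbove, large, mem_filter, mem_Ioc] at hm ⊢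
      exact ⟨⟨⟨by omega, by omega⟩, hm.2⟩, hm.1⟩
    · calc #(bipartiteBelow (fun a m => m ∈ Ioc a (a + L)) runs m) ≤ #(Ico (m - L) m) := by
            refine card_le_card fun a ha => ?_
            simp only [bipartiteBelow, mem_filter, mem_Ioc, mem_Ico] at ha ⊢
            omega
        _ ≤ L := by simp only [Nat.card_Ico]; omega
  have hy' : (0 : ℝ) < y := by exact_mod_cast hy
  have hlarge : (#large : ℝ) * y ≤ 2 * (N + L) := by
    have h := card_filter_large_square_dvd_Ioc_le (N + L) y
    rw [le_div_iff₀ (by positivity)] at h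
    push_cast at h
    nlinarith
  have hruns : (#runs : ℝ) * y ≤ 48 * (N + L) := by
    have : (#runs : ℝ) * y ≤ #large * L := by exact_mod_cast hdouble
    push_cast [L] at this hlarge ⊢
    nlinarith
  rw [show 48 / (y : ℝ) * N + 1152 = 48 * (N + L) / y by push_cast [L]; field_simp; ring,
    le_div_iff₀ hy']
  exact hruns

end Nat

theorem card_filter_range_add_le (P : ℤ → Prop) [DecidablePred P] (c : ℤ) (N : ℕ) :
    #{j ∈ range N | P (c + (j : ℕ))} ≤ #{a ∈ range (N + c.toNat) | P (a : ℕ)} + (-c).toNat := by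
  have hsplit : {j ∈ range N | P (c + (j : ℕ))} ⊆
      {j ∈ range N | P (c + (j : ℕ)) ∧ 0 ≤ c + (j : ℕ)} ∪ range (-c).toNat := by
    intro j hj
    simp only [mem_filter, mem_union, mem_range] at hj ⊢
    by_cases h0 : 0 ≤ c + j
    exacts [Or.inl ⟨hj.1, hj.2, h0⟩, Or.inr (by omega)]
  have hinj : #{j ∈ range N | P (c + (j : ℕ)) ∧ 0 ≤ c + (j : ℕ)} ≤
      #{a ∈ range (N + c.toNat) | P (a : ℕ)} := by
    refine card_le_card_of_injOn (fun j => (c + j).toNat) (fun j hj => ?_) fun j hj j' hj' h => ?_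
    · simp only [coe_filter, mem_range, Set.mem_ofPred_eq] at hj ⊢
      exact ⟨by omega, by rw [Int.toNat_of_nonneg hj.2.2]; exact hj.2.1⟩
    · simp only [coe_filter, mem_range, Set.mem_ofPred_eq] at hj hj' h
      omega
  calc _ ≤ _ := card_le_card hsplit
    _ ≤ _ := card_union_le _ _
    _ ≤ _ := by rw [card_range]; omega

theorem le_of_tendsto_average {S : ℕ → ℝ} {Nk : ℕ → ℕ} (hNk : Tendsto Nk atTop atTop) {l ε C : ℝ}
    (hS : ∀ N, S N ≤ ε * N + C) (h : Tendsto (fun k => (Nk k : ℝ)⁻¹ * S (Nk k)) atTop (𝓝 l)) :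
    l ≤ ε := by
  have hbound : Tendsto (fun k => ε + C / Nk k) atTop (𝓝 ε) := by
    simpa using tendsto_const_nhds.add
      (tendsto_const_nhds.div_atTop ((tendsto_natCast_atTop_atTop (R := ℝ)).comp hNk))
  refine le_of_tendsto_of_tendsto h hbound ?_
  filter_upwards [hNk.eventually_ge_atTop 1] with k hk
  have : (0 : ℝ) < Nk k := by exact_mod_cast hk
  calc (Nk k : ℝ)⁻¹ * S (Nk k) ≤ (Nk k : ℝ)⁻¹ * (ε * Nk k + C) := by gcongr; exact hS _
    _ = ε + C / Nk k := by field_simp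

theorem measure_eq_zero_of_forall_measureReal_le {α : Type*} [MeasurableSpace α] {μ : Measure α}
    [IsFiniteMeasure μ] {s : Set α} (h : ∀ ε > 0, μ.real s ≤ ε) : μ s = 0 := by
  rw [← measureReal_eq_zero_iff]
  exact le_antisymm (le_of_forall_pos_le_add fun ε hε => by simpa using h ε hε) measureReal_nonneg

section EmpiricalMeasures

variable {X : Type*} [TopologicalSpace X] [MeasurableSpace X] [OpensMeasurableSpace X]

/-- `ν` is the weak-* limit of the empirical measures `N_k⁻¹ ∑_{j < N_k} δ_{x j}`. -/
def IsEmpiricalWeakLimit (x : ℕ → X) (Nk : ℕ → ℕ) (ν : Measure X) : Prop :=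
  ∀ f : X →ᵇ ℝ, Tendsto (fun k => (Nk k : ℝ)⁻¹ * ∑ j ∈ range (Nk k), f (x j)) atTop
    (𝓝 (∫ y, f y ∂ν))

theorem IsEmpiricalWeakLimit.measureReal_le {x : ℕ → X} {Nk : ℕ → ℕ} {ν : Measure X}
    [IsFiniteMeasure ν] (h : IsEmpiricalWeakLimit x Nk ν) (hNk : Tendsto Nk atTop atTop)
    {V : Set X} (hV : MeasurableSet V) (f : X →ᵇ ℝ) (hVf : V.indicator (1 : X → ℝ) ≤ f) {ε C : ℝ}
    (hsum : ∀ N, ∑ j ∈ range N, f (x j) ≤ ε * N + C) : ν.real V ≤ ε :=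
  calc ν.real V = ∫ y, V.indicator 1 y ∂ν := (integral_indicator_one hV).symm
    _ ≤ ∫ y, f y ∂ν := integral_mono ((integrable_const 1).indicator hV) (f.integrable ν) hVf
    _ ≤ ε := le_of_tendsto_average hNk hsum (h f)

end EmpiricalMeasures

section WindowBump

variable {ι : Type*} (W : Finset ι)

noncomputable def windowBump : (ι → ℝ) →ᵇ ℝ :=
  .mkOfBound ⟨fun ω => max 0 (1 - ∑ n ∈ W, |ω n|), by fun_prop⟩ 1 fun ω ω' => by
    have hmem (ω : ι → ℝ) : max 0 (1 - ∑ n ∈ W, |ω n|) ∈ Set.Icc (0 : ℝ) 1 :=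
      ⟨le_max_left _ _,
        max_le zero_le_one (by linarith [sum_nonneg fun n (_ : n ∈ W) => abs_nonneg (ω n)])⟩
    simpa using Real.dist_le_of_mem_Icc (hmem ω) (hmem ω')

theorem windowBump_apply (ω : ι → ℝ) : windowBump W ω = max 0 (1 - ∑ n ∈ W, |ω n|) := rfl

theorem windowBump_le_one (ω : ι → ℝ) : windowBump W ω ≤ 1 :=
  max_le zero_le_one (by linarith [sum_nonneg fun n (_ : n ∈ W) => abs_nonneg (ω n)])

theorem indicator_le_windowBump :
    {ω : ι → ℝ | ∀ n ∈ W, ω n = 0}.indicator (1 : (ι → ℝ) → ℝ) ≤ windowBump W := by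
  intro ω
  rw [Set.indicator_apply]
  split_ifs with hω
  · rw [windowBump_apply, sum_eq_zero fun n hn => by rw [show ω n = 0 from hω n hn, abs_zero]]
    simp
  · exact le_max_left _ _

theorem windowBump_eq_indicator {ω : ι → ℝ} (hω : ∀ n ∈ W, ω n ∈ Set.range ((↑) : ℤ → ℝ)) :
    windowBump W ω = {ω : ι → ℝ | ∀ n ∈ W, ω n = 0}.indicator (1 : (ι → ℝ) → ℝ) ω := by
  refine le_antisymm ?_ (indicator_le_windowBump W ω)
  rw [Set.indicator_apply]
  split_ifs with hzero
  · exact windowBump_le_one W ω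
  · obtain ⟨n, hn, hne⟩ := not_forall₂.1 hzero
    obtain ⟨z, hz⟩ := hω n hn
    have hz1 : (1 : ℝ) ≤ |ω n| := by
      rw [← hz] at hne ⊢
      exact_mod_cast Int.one_le_abs (by exact_mod_cast hne)
    exact max_le le_rfl (by linarith [single_le_sum (fun n (_ : n ∈ W) => abs_nonneg (ω n)) hn])

end WindowBump

theorem omegaBar_mem_range_intCast (n : ℤ) : omegaBar n ∈ Set.range ((↑) : ℤ → ℝ) := by
  unfold omegaBar
  split_ifs
  exacts [⟨_, rfl⟩, ⟨0, Int.cast_zero⟩]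

theorem omegaBar_eq_zero_iff (n : ℤ) : omegaBar n = 0 ↔ ¬ Squarefree n.toNat := by
  unfold omegaBar
  split_ifs with hn
  · rw [Int.cast_eq_zero, ← ArithmeticFunction.moebius_ne_zero_iff_squarefree, not_not]
  · simp [Int.toNat_of_nonpos (not_lt.1 hn)]

theorem omegaBar_vanishes_on_Ioc_natCast_iff (a L : ℕ) :
    (∀ n ∈ Ioc (a : ℤ) (a + L), omegaBar n = 0) ↔ ∀ m ∈ Ioc a (a + L), ¬ Squarefree m := by
  refine ⟨fun h m hm => ?_, fun h n hn => ?_⟩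
  · simpa using (omegaBar_eq_zero_iff m).1 (h m (by simp only [mem_Ioc] at hm ⊢; omega))
  · rw [omegaBar_eq_zero_iff]
    exact h n.toNat (by simp only [mem_Ioc] at hn ⊢; omega)

theorem exists_card_omegaBar_vanishing_windows_le {y : ℕ} (hy : 0 < y) (c : ℤ) :
    ∃ C : ℝ, ∀ N : ℕ,
      (#{j ∈ range N | ∀ n ∈ Ioc c (c + (24 * y : ℕ)), omegaBar (n + (j : ℕ)) = 0} : ℝ) ≤
        48 / y * N + C := by
  have hshift (b : ℤ) : (∀ n ∈ Ioc c (c + (24 * y : ℕ)), omegaBar (n + b) = 0) ↔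
      ∀ n ∈ Ioc (c + b) (c + b + (24 * y : ℕ)), omegaBar n = 0 := by
    refine ⟨fun h n hn => ?_, fun h n hn => h (n + b) ?_⟩
    · simpa using h (n - b) (by simp only [mem_Ioc] at hn ⊢; omega)
    · simp only [mem_Ioc] at hn ⊢; omega
  refine ⟨48 / y * c.toNat + 1152 + (-c).toNat, fun N => ?_⟩
  rw [filter_congr fun (j : ℕ) _ => hshift j]
  refine (Nat.cast_le.2 (card_filter_range_add_le
    (fun b => ∀ n ∈ Ioc b (b + (24 * y : ℕ)), omegaBar n = 0) c N)).trans ?_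
  rw [filter_congr fun a _ => omegaBar_vanishes_on_Ioc_natCast_iff a (24 * y)]
  have := Nat.card_nonsquarefree_runs_le hy (N + c.toNat)
  push_cast at this ⊢
  linarith

theorem sum_windowBump_omegaBar_orbit (W : Finset ℤ) (N : ℕ) :
    ∑ j ∈ range N, windowBump W (fun n => omegaBar (n + (j : ℕ))) =
      #{j ∈ range N | ∀ n ∈ W, omegaBar (n + (j : ℕ)) = 0} := by
  simp only [windowBump_eq_indicator W fun n _ => omegaBar_mem_range_intCast _,
    Set.indicator_apply, Set.mem_ofPred_eq, Pi.one_apply, sum_boole]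

theorem exists_measureReal_vanishing_Ioc_le {ν : Measure (ℤ → ℝ)} [IsFiniteMeasure ν]
    {Nk : ℕ → ℕ} (h : IsEmpiricalWeakLimit (fun j n => omegaBar (n + (j : ℕ))) Nk ν)
    (hNk : Tendsto Nk atTop atTop) {ε : ℝ} (hε : 0 < ε) :
    ∃ L : ℕ, ∀ c : ℤ, ν.real {ω | ∀ n ∈ Ioc c (c + L), ω n = 0} ≤ ε := by
  obtain ⟨y, hy, hyε⟩ : ∃ y : ℕ, 0 < y ∧ 48 / (y : ℝ) ≤ ε := by
    refine ⟨⌈48 / ε⌉₊, Nat.ceil_pos.2 (by positivity), ?_⟩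
    rw [div_le_iff₀ (by positivity), ← div_le_iff₀' hε]
    exact Nat.le_ceil _
  refine ⟨24 * y, fun c => ?_⟩
  obtain ⟨C, hC⟩ := exists_card_omegaBar_vanishing_windows_le hy c
  refine h.measureReal_le hNk (by measurability) _ (indicator_le_windowBump _) (C := C)
    fun N => ?_
  rw [sum_windowBump_omegaBar_orbit]
  exact (hC N).trans (by gcongr)

section NullSets

variable {ν : Measure (ℤ → ℝ)} [IsFiniteMeasure ν] {Nk : ℕ → ℕ}

theorem measure_eventually_zero_right_eq_zero
    (h : IsEmpiricalWeakLimit (fun j n => omegaBar (n + (j : ℕ))) Nk ν)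
    (hNk : Tendsto Nk atTop atTop) (c : ℤ) : ν {ω | ∀ n, c ≤ n → ω n = 0} = 0 :=
  measure_eq_zero_of_forall_measureReal_le fun _ hε => by
    obtain ⟨L, hL⟩ := exists_measureReal_vanishing_Ioc_le h hNk hε
    have hsub : {ω : ℤ → ℝ | ∀ n, c ≤ n → ω n = 0} ⊆ {ω | ∀ n ∈ Ioc c (c + L), ω n = 0} :=
      fun ω hω n hn => hω n (mem_Ioc.1 hn).1.le
    exact (measureReal_mono hsub).trans (hL c)

theorem measure_eventually_zero_left_eq_zero
    (h : IsEmpiricalWeakLimit (fun j n => omegaBar (n + (j : ℕ))) Nk ν)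
    (hNk : Tendsto Nk atTop atTop) (c : ℤ) : ν {ω | ∀ n, n ≤ c → ω n = 0} = 0 :=
  measure_eq_zero_of_forall_measureReal_le fun _ hε => by
    obtain ⟨L, hL⟩ := exists_measureReal_vanishing_Ioc_le h hNk hε
    have hsub : {ω : ℤ → ℝ | ∀ n, n ≤ c → ω n = 0} ⊆
        {ω | ∀ n ∈ Ioc (c - L) (c - L + L), ω n = 0} :=
      fun ω hω n hn => hω n (by linarith [(mem_Ioc.1 hn).2])
    exact (measureReal_mono hsub).trans (hL (c - L))

end NullSets

theorem eventually_zero_set_null_general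
    (ν : Measure (ℤ → ℝ)) (hprob : IsProbabilityMeasure ν)
    (Nk : ℕ → ℕ) (hmono : StrictMono Nk)
    (hlim : ∀ f : BoundedContinuousFunction (ℤ → ℝ) ℝ,
      Tendsto
        (fun k => (Nk k : ℝ)⁻¹ *
          ∑ j ∈ Finset.range (Nk k), f (fun n => omegaBar (n + j)))
        atTop (𝓝 (∫ x, f x ∂ν))) :
    ν {ω : ℤ → ℝ | ω ∈ Xspace ∧ ∃ k : ℤ, 1 ≤ k ∧
        ((∀ n : ℤ, k ≤ n → ω n = 0) ∨ (∀ n : ℤ, n ≤ -k → ω n = 0))} = 0 := by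
  have hNk := hmono.tendsto_atTop
  refine measure_mono_null (fun ω hω => ?_) (measure_iUnion_null fun k : ℤ => measure_union_null
    (measure_eventually_zero_right_eq_zero hlim hNk k)
    (measure_eventually_zero_left_eq_zero hlim hNk (-k)))
  obtain ⟨-, k, -, hk⟩ := hω
  exact Set.mem_iUnion.2 ⟨k, hk⟩

/-- **(2.5).** For any weak*-limit point `ν` of `ν_N = (1/N) ∑_{j<N} δ_{T^j ω̄}`,
the set of `ω ∈ X` that vanish eventually to the right or eventually to the
left has `ν`-measure zero. -/
theorem eventually_zero_set_null
    (ν : Measure (ℤ → ℝ)) (hprob : IsProbabilityMeasure ν)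
    (Nk : ℕ → ℕ) (hmono : StrictMono Nk) (hpos : ∀ k, 1 ≤ Nk k)
    (hlim : ∀ f : BoundedContinuousFunction (ℤ → ℝ) ℝ,
      Tendsto
        (fun k => (Nk k : ℝ)⁻¹ *
          ∑ j ∈ Finset.range (Nk k), f (fun n => omegaBar (n + j)))
        atTop (𝓝 (∫ x, f x ∂ν))) :
    ν {ω : ℤ → ℝ | ω ∈ Xspace ∧ ∃ k : ℤ, 1 ≤ k ∧
        ((∀ n : ℤ, k ≤ n → ω n = 0) ∨ (∀ n : ℤ, n ≤ -k → ω n = 0))} = 0 :=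
  eventually_zero_set_null_general ν hprob Nk hmono hlim
end

section
/- Let V : ℕ → ℝ, E ∈ ℝ, and let ψ : ℕ → ℝ satisfy ψ(0) = 0 and ψ(n+1) + ψ(n−1) + V(n)ψ(n) = E ψ(n) for all n ≥ 1. Let ℓ ≥ 1 and suppose the ℓ×ℓ Jacobi matrix H_ℓ with diagonal entries V(1),…,V(ℓ) and entries 1 on the off-diagonals satisfies that H_ℓ − E is invertible. Then for every 1 ≤ x ≤ ℓ, ψ(x) = −ψ(ℓ+1)·((H_ℓ − E)⁻¹)(x,ℓ); in particular |ψ(x)| ≤ |ψ(ℓ+1)|·|((H_ℓ − E)⁻¹)(x,ℓ)|. -/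
/-!
The vector `u = (ψ(1), …, ψ(ℓ))` satisfies `(H_ℓ - E) u = -ψ(ℓ+1) e_ℓ`: row `x` of `H_ℓ - E`
applied to `u` is the recurrence at `n = x`, except that in the first row the missing term is
`ψ(0) = 0` and in the last row the term `ψ(ℓ+1)` lies outside the box. Applying `(H_ℓ - E)⁻¹`
gives `u = -ψ(ℓ+1) · (H_ℓ - E)⁻¹ e_ℓ`.
-/

open Matrix

/-- The `ℓ × ℓ` Jacobi matrix with diagonal `V(1), …, V(ℓ)` (index `i : Fin ℓ`
corresponds to `k = i + 1`) and ones on the off-diagonals. -/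
noncomputable def Hjac (V : ℕ → ℝ) (ℓ : ℕ) : Matrix (Fin ℓ) (Fin ℓ) ℝ :=
  fun i j =>
    if i = j then V (i + 1)
    else if (i : ℤ) - (j : ℤ) = 1 ∨ (j : ℤ) - (i : ℤ) = 1 then 1 else 0

lemma Hjac_apply (V : ℕ → ℝ) (ℓ : ℕ) (i j : Fin ℓ) :
    Hjac V ℓ i j =
      if (j : ℕ) = i then V (i + 1) else if (j : ℕ) + 1 = i ∨ (j : ℕ) = i + 1 then 1 else 0 := by
  simp only [Hjac, Fin.ext_iff]
  split_ifs <;> first | rfl | omega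

lemma Hjac_mulVec_comp_succ_apply (V : ℕ → ℝ) {f : ℕ → ℝ} (hf : f 0 = 0) (ℓ : ℕ) (i : Fin ℓ) :
    (Hjac V ℓ *ᵥ fun j => f (j + 1)) i =
      f i + V (i + 1) * f (i + 1) + if (i : ℕ) + 1 < ℓ then f (i + 2) else 0 := by
  obtain ⟨a, ha⟩ := i
  have entry (b : ℕ) :
      (if b = a then V (a + 1) else if b + 1 = a ∨ b = a + 1 then 1 else 0) * f (b + 1) =
        (if b = a - 1 then f a else 0) + (if b = a then V (a + 1) * f (a + 1) else 0) +
          (if b = a + 1 then f (a + 2) else 0) := by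
    -- At `a = 0` the `b = a - 1` term is the junk index `b = 0`, harmless because `f 0 = 0`.
    cases a <;> split_ifs <;> first | omega | (subst_vars; simp_all)
  simp only [mulVec, dotProduct, Hjac_apply]
  rw [Fin.sum_univ_eq_sum_range (fun b => (if b = a then V (a + 1)
    else if b + 1 = a ∨ b = a + 1 then 1 else 0) * f (b + 1))]
  simp only [entry, Finset.sum_add_distrib, Finset.sum_ite_eq', Finset.mem_range]
  rw [if_pos (by omega), if_pos ha]

lemma Hjac_sub_smul_mulVec_eq_single (V : ℕ → ℝ) (E : ℝ) {ψ : ℕ → ℝ} (h0 : ψ 0 = 0)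
    (heq : ∀ n : ℕ, 1 ≤ n → ψ (n + 1) + ψ (n - 1) + V n * ψ n = E * ψ n)
    {ℓ : ℕ} (k : Fin ℓ) (hk : (k : ℕ) + 1 = ℓ) :
    (Hjac V ℓ - E • (1 : Matrix (Fin ℓ) (Fin ℓ) ℝ)) *ᵥ (fun i => ψ (i + 1)) =
      Pi.single k (-ψ (ℓ + 1)) := by
  ext i
  have hrec := heq (i + 1) (by omega)
  rw [Nat.add_sub_cancel] at hrec
  rw [sub_mulVec, smul_mulVec, one_mulVec, Pi.sub_apply, Pi.smul_apply, smul_eq_mul,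
    Hjac_mulVec_comp_succ_apply V h0, Pi.single_apply]
  by_cases hik : i = k
  · subst hik
    rw [if_neg (by omega), if_pos rfl, show ℓ + 1 = i + 1 + 1 by omega]
    linarith
  · rw [if_pos (by omega), if_neg hik]
    linarith

lemma Matrix.apply_eq_mul_inv_apply_of_mulVec_eq_single {n R : Type*} [Fintype n] [DecidableEq n]
    [CommRing R] {A : Matrix n n R} (hA : IsUnit A) {u : n → R} {k : n} {c : R}
    (h : A *ᵥ u = Pi.single k c) (i : n) : u i = c * A⁻¹ i k := by
  have := hA.invertible
  rw [← inv_mulVec_eq_vec h.symm, mulVec_single]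
  simp [mul_comm]

/-- **(3.16)–(3.17).** If `ψ(0) = 0` and `ψ(n+1) + ψ(n-1) + V(n)ψ(n) = Eψ(n)` for
all `n ≥ 1`, and `H_ℓ - E` is invertible, then for `1 ≤ x ≤ ℓ` one has
`ψ(x) = -ψ(ℓ+1) · (H_ℓ - E)⁻¹(x, ℓ)`, so `|ψ(x)| ≤ |ψ(ℓ+1)| · |(H_ℓ - E)⁻¹(x, ℓ)|`. -/
theorem solution_green_bound
    (V : ℕ → ℝ) (E : ℝ) (ψ : ℕ → ℝ)
    (h0 : ψ 0 = 0)
    (heq : ∀ n : ℕ, 1 ≤ n → ψ (n + 1) + ψ (n - 1) + V n * ψ n = E * ψ n)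
    (ℓ : ℕ) (hℓ : 1 ≤ ℓ)
    (hinv : IsUnit (Hjac V ℓ - E • (1 : Matrix (Fin ℓ) (Fin ℓ) ℝ))) :
    ∀ x : Fin ℓ,
      ψ (x + 1) =
        -ψ (ℓ + 1) *
          ((Hjac V ℓ - E • (1 : Matrix (Fin ℓ) (Fin ℓ) ℝ))⁻¹ x ⟨ℓ - 1, by omega⟩) ∧
      |ψ (x + 1)| ≤
        |ψ (ℓ + 1)| *
          |(Hjac V ℓ - E • (1 : Matrix (Fin ℓ) (Fin ℓ) ℝ))⁻¹ x ⟨ℓ - 1, by omega⟩| := by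
  intro x
  have hsol := Hjac_sub_smul_mulVec_eq_single V E h0 heq (ℓ := ℓ) ⟨ℓ - 1, by omega⟩ (Nat.sub_add_cancel hℓ)
  have hx := apply_eq_mul_inv_apply_of_mulVec_eq_single hinv hsol x
  exact ⟨hx, by rw [hx, abs_mul, abs_neg]⟩
end
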